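/- arXiv:2302.09780 — 2 statements merged into one kernel-verified Lean document; each statement's English description precedes it below -/
import Mathlib

section
/- For all real x ≤ x₀ with x₀ > 0, the inequality exp(x) ≤ 1 + x + c(x₀)·x² holds, where c(x₀) = (e^{x₀} − 1 − x₀)/x₀². -/
open Real

lemma exp_tsum_shift (y : ℝ) :
    Real.exp y = 1 + y + ∑' n : ℕ, y ^ (n + 2) / ((n + 2).factorial : ℝ) := by
  have hs : Summable (fun n : ℕ => y ^ n / (n.factorial : ℝ)) := Real.summable_pow_div_factorial y
  have h0 : Real.exp y = ∑' n : ℕ, y ^ n / (n.factorial : ℝ) := by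
    rw [Real.exp_eq_exp_ℝ, NormedSpace.exp_eq_tsum_div]
  rw [h0, Summable.tsum_eq_zero_add hs, Summable.tsum_eq_zero_add ((summable_nat_add_iff 1).mpr hs)]
  have h2 : (∑' b : ℕ, y ^ (b + 1 + 1) / (((b + 1 + 1).factorial : ℕ) : ℝ)) =
      ∑' n : ℕ, y ^ (n + 2) / ((n + 2).factorial : ℝ) := rfl
  rw [h2]
  norm_num [Nat.factorial]
  ring

lemma exp_le_quad_of_nonpos {x : ℝ} (hx : x ≤ 0) : Real.exp x ≤ 1 + x + x ^ 2 / 2 := by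
  set f : ℝ → ℝ := fun x => 1 + x + x ^ 2 / 2 - Real.exp x with hf
  have hder : ∀ y : ℝ, HasDerivAt f (1 + y - Real.exp y) y := by
    intro y
    have h1 : HasDerivAt (fun x : ℝ => 1 + x + x ^ 2 / 2) (1 + y) y := by
      have := ((hasDerivAt_id y).const_add 1).add ((hasDerivAt_pow 2 y).div_const 2)
      refine this.congr_deriv ?_
      · norm_num
    exact h1.sub (Real.hasDerivAt_exp y)
  have hanti : Antitone f := by
    apply antitone_of_deriv_nonpos (fun y => (hder y).differentiableAt)
    intro y
    rw [(hder y).deriv]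
    have := Real.add_one_le_exp y
    linarith
  have := hanti hx
  simp only [hf] at this
  norm_num at this
  linarith

/-- For all real `x ≤ x₀` with `x₀ > 0`,
`exp x ≤ 1 + x + c(x₀) x²` where `c(x₀) = (e^{x₀} - 1 - x₀)/x₀²`. -/
theorem exp_le_one_add_add_sq {x₀ : ℝ} (hx₀ : 0 < x₀) :
    ∀ x : ℝ, x ≤ x₀ →
      Real.exp x ≤ 1 + x + ((Real.exp x₀ - 1 - x₀) / x₀ ^ 2) * x ^ 2 := by
  intro x hx
  set S : ℝ := ∑' n : ℕ, x₀ ^ n / ((n + 2).factorial : ℝ) with hS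
  have hsumS : Summable (fun n : ℕ => x₀ ^ n / ((n + 2).factorial : ℝ)) := by
    apply Summable.of_nonneg_of_le
      (fun n => by positivity) (fun n => ?_) (Real.summable_pow_div_factorial x₀)
    apply div_le_div_of_nonneg_left (by positivity) (by positivity)
    exact_mod_cast Nat.factorial_le (by omega)
  have hsum2 : Summable (fun n : ℕ => x₀ ^ (n + 2) / ((n + 2).factorial : ℝ)) :=
    (summable_nat_add_iff 2).mpr (Real.summable_pow_div_factorial x₀)
  have hmul : x₀ ^ 2 * S = ∑' n : ℕ, x₀ ^ (n + 2) / ((n + 2).factorial : ℝ) := by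
    rw [hS, ← tsum_mul_left]
    exact tsum_congr fun n => by ring
  have hc : Real.exp x₀ - 1 - x₀ = x₀ ^ 2 * S := by
    rw [hmul, exp_tsum_shift x₀]; ring
  have hcS : (Real.exp x₀ - 1 - x₀) / x₀ ^ 2 = S := by
    rw [hc]; field_simp
  have hShalf : (1 : ℝ) / 2 ≤ S := by
    calc (1 : ℝ) / 2 = x₀ ^ 0 / (((0 + 2).factorial : ℕ) : ℝ) := by norm_num [Nat.factorial]
      _ ≤ S := Summable.le_tsum hsumS 0 (fun n _ => by positivity)
  rw [hcS]
  rcases le_or_gt x 0 with hx0 | hx0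
  · have h1 := exp_le_quad_of_nonpos hx0
    nlinarith [sq_nonneg x]
  · -- 0 < x ≤ x₀
    have hxsum2 : Summable (fun n : ℕ => x ^ (n + 2) / ((n + 2).factorial : ℝ)) :=
      (summable_nat_add_iff (f := fun n : ℕ => x ^ n / (n.factorial : ℝ)) 2).mpr
        (Real.summable_pow_div_factorial x)
    have hterm : ∀ n : ℕ, x ^ (n + 2) / ((n + 2).factorial : ℝ)
        ≤ x ^ 2 * (x₀ ^ n / ((n + 2).factorial : ℝ)) := by
      intro n
      rw [← mul_div_assoc]
      apply div_le_div_of_nonneg_right ?_ (by positivity)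
      calc x ^ (n + 2) = x ^ 2 * x ^ n := by ring
        _ ≤ x ^ 2 * x₀ ^ n :=
            mul_le_mul_of_nonneg_left (pow_le_pow_left₀ hx0.le hx n) (by positivity)
    have hle := Summable.tsum_le_tsum hterm hxsum2 (hsumS.mul_left (x ^ 2))
    rw [tsum_mul_left] at hle
    rw [exp_tsum_shift x]
    linarith [hle]
end

section
/- Under the latent-variable table model, the entropy per entry satisfies H(X|U,V) ≤ H(X^{m,n})/(mn) ≤ H(X|U,V) + H(U)/n + H(V)/m, where (X,U,V) has joint distribution Q(x|u,v)q_r(u)q_c(v). -/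
open Finset Real

/-- Shannon entropy (in bits) of a probability vector on a finite type. -/
noncomputable def H2 {α : Type*} [Fintype α] (p : α → ℝ) : ℝ :=
  -∑ a, p a * Real.logb 2 (p a)

/-- The marginal distribution of the table `X^{m,n}` in the latent-variable model. -/
noncomputable def tableP {𝒳 L : Type*} [Fintype 𝒳] [Fintype L]
    (qr qc : L → ℝ) (Q : 𝒳 → L → L → ℝ) (m n : ℕ)
    (x : Fin m → Fin n → 𝒳) : ℝ :=
  ∑ u : Fin m → L, ∑ v : Fin n → L,
    ((∏ i, qr (u i)) * (∏ j, qc (v j))) * ∏ i, ∏ j, Q (x i j) (u i) (v j)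

/-- Natural-log Shannon entropy. -/
noncomputable def ent {α : Type*} [Fintype α] (p : α → ℝ) : ℝ := -∑ a, p a * Real.log (p a)

lemma H2_eq_ent {α : Type*} [Fintype α] (p : α → ℝ) : H2 p = ent p / Real.log 2 := by
  simp [H2, ent, Real.logb, Finset.sum_div, mul_div_assoc, neg_div]

lemma sum_pi_prod {ι α : Type*} [Fintype ι] [DecidableEq ι] [Fintype α] (g : ι → α → ℝ) :
    ∑ f : ι → α, ∏ i, g i (f i) = ∏ i, ∑ a, g i a := by
  rw [Finset.prod_univ_sum (fun _ => Finset.univ) g, Fintype.piFinset_univ]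

lemma sum_pi_marg {ι α : Type*} [Fintype ι] [DecidableEq ι] [Fintype α]
    (q : ι → α → ℝ) (hq1 : ∀ j, ∑ a, q j a = 1) (i₀ : ι) (F : α → ℝ) :
    ∑ f : ι → α, (∏ i, q i (f i)) * F (f i₀) = ∑ a, q i₀ a * F a := by
  have key : ∀ f : ι → α, (∏ i, q i (f i)) * F (f i₀)
      = ∏ i, (q i (f i) * (if i = i₀ then F (f i) else 1)) := by
    intro f
    rw [Finset.prod_mul_distrib, Finset.prod_ite_eq' Finset.univ i₀ (fun i => F (f i))]
    simp
  simp_rw [key]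
  rw [sum_pi_prod (fun i a => q i a * if i = i₀ then F a else 1)]
  have key2 : ∀ i, (∑ a, q i a * (if i = i₀ then F a else 1))
      = if i = i₀ then ∑ a, q i₀ a * F a else 1 := by
    intro i
    split
    · next h => subst h; rfl
    · simp [hq1]
  simp_rw [key2]
  rw [Finset.prod_ite_eq' Finset.univ i₀ (fun _ => ∑ a, q i₀ a * F a)]
  simp

lemma sum_pi_one {ι α : Type*} [Fintype ι] [DecidableEq ι] [Fintype α]
    (q : ι → α → ℝ) (hq1 : ∀ j, ∑ a, q j a = 1) :
    ∑ f : ι → α, ∏ i, q i (f i) = 1 := by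
  rw [sum_pi_prod]; simp [hq1]

lemma ent_pi {ι α : Type*} [Fintype ι] [DecidableEq ι] [Fintype α] (P : ι → α → ℝ)
    (h1 : ∀ i, ∑ a, P i a = 1) :
    ent (fun f : ι → α => ∏ i, P i (f i)) = ∑ i, ent (P i) := by
  have hR : ∑ i, ent (P i) = -∑ i, ∑ a, P i a * Real.log (P i a) := by
    simp [ent]
  rw [hR]
  unfold ent
  congr 1
  have key : ∀ f : ι → α, (∏ i, P i (f i)) * Real.log (∏ i, P i (f i))
      = ∑ i, (∏ j, P j (f j)) * Real.log (P i (f i)) := by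
    intro f
    by_cases hz : ∃ i, P i (f i) = 0
    · obtain ⟨i, hi⟩ := hz
      have hp : ∏ j, P j (f j) = 0 := Finset.prod_eq_zero (Finset.mem_univ i) hi
      simp [hp]
    · push_neg at hz
      rw [Real.log_prod (fun i _ => hz i), Finset.mul_sum]
  simp_rw [key]
  rw [Finset.sum_comm]
  refine Finset.sum_congr rfl (fun i _ => ?_)
  exact sum_pi_marg P h1 i (fun a => Real.log (P i a))

lemma gibbs {α : Type*} [Fintype α] (p q : α → ℝ) (hp0 : ∀ x, 0 ≤ p x) (hq0 : ∀ x, 0 ≤ q x)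
    (hp1 : ∑ x, p x = 1) (hq1 : ∑ x, q x ≤ 1) (hsupp : ∀ x, p x ≠ 0 → q x ≠ 0) :
    ∑ x, p x * Real.log (q x) ≤ ∑ x, p x * Real.log (p x) := by
  have key : ∀ x, p x * Real.log (q x) - p x * Real.log (p x) ≤ q x - p x := by
    intro x
    rcases eq_or_lt_of_le (hp0 x) with h | h
    · simp only [← h, zero_mul, sub_zero, sub_self]
      exact hq0 x
    · have hq : 0 < q x := lt_of_le_of_ne (hq0 x) (Ne.symm (hsupp x h.ne'))
      have hlog : Real.log (q x) - Real.log (p x) = Real.log (q x / p x) :=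
        (Real.log_div hq.ne' h.ne').symm
      have hle := Real.log_le_sub_one_of_pos (div_pos hq h)
      calc p x * Real.log (q x) - p x * Real.log (p x)
          = p x * Real.log (q x / p x) := by rw [← mul_sub, hlog]
        _ ≤ p x * (q x / p x - 1) := by nlinarith
        _ = q x - p x := by field_simp
  have hs := Finset.sum_le_sum (s := Finset.univ) (fun x _ => key x)
  rw [Finset.sum_sub_distrib, Finset.sum_sub_distrib, hp1] at hs
  linarith

lemma ent_mix_ge {K α : Type*} [Fintype K] [Fintype α] (w : K → ℝ) (p : K → α → ℝ)
    (hw0 : ∀ k, 0 ≤ w k) (hw1 : ∑ k, w k = 1)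
    (hp0 : ∀ k a, 0 ≤ p k a) (hp1 : ∀ k, ∑ a, p k a = 1) :
    ∑ k, w k * ent (p k) ≤ ent (fun a => ∑ k, w k * p k a) := by
  set q : α → ℝ := fun a => ∑ k, w k * p k a with hq
  have hq0 : ∀ a, 0 ≤ q a := fun a => Finset.sum_nonneg (fun k _ => mul_nonneg (hw0 k) (hp0 k a))
  have hq1 : ∑ a, q a = 1 := by
    rw [show ∑ a, q a = ∑ k, ∑ a, w k * p k a from Finset.sum_comm]
    simp_rw [← Finset.mul_sum]
    simp [hp1, hw1]
  have hmarg : ∑ a, q a * Real.log (q a) = ∑ k, w k * ∑ a, p k a * Real.log (q a) := by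
    simp_rw [hq, Finset.sum_mul]
    rw [Finset.sum_comm]
    refine Finset.sum_congr rfl (fun k _ => ?_)
    rw [Finset.mul_sum]
    exact Finset.sum_congr rfl (fun a _ => by ring)
  show ∑ k, w k * ent (p k) ≤ -∑ a, q a * Real.log (q a)
  rw [hmarg]
  rw [← Finset.sum_neg_distrib]
  simp only [ent]
  rw [show ∑ k, w k * -∑ a, p k a * Real.log (p k a)
      = ∑ k, -(w k * ∑ a, p k a * Real.log (p k a)) from
    Finset.sum_congr rfl (fun k _ => by ring)]
  refine Finset.sum_le_sum (fun k _ => ?_)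
  rcases eq_or_lt_of_le (hw0 k) with h | h
  · simp [← h]
  · have hg := gibbs (p k) q (hp0 k) hq0 (hp1 k) (le_of_eq hq1)
      (fun a ha => by
        have hpa : 0 < p k a := lt_of_le_of_ne (hp0 k a) (Ne.symm ha)
        have hpos : 0 < w k * p k a := mul_pos h hpa
        have hle : w k * p k a ≤ q a :=
          Finset.single_le_sum (f := fun k' => w k' * p k' a)
            (fun k' _ => mul_nonneg (hw0 k') (hp0 k' a)) (Finset.mem_univ k)
        exact (lt_of_lt_of_le hpos hle).ne')
    nlinarith

lemma ent_mix_le {K α : Type*} [Fintype K] [Fintype α] (w : K → ℝ) (p : K → α → ℝ)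
    (hw0 : ∀ k, 0 ≤ w k) (hp0 : ∀ k a, 0 ≤ p k a) (hp1 : ∀ k, ∑ a, p k a = 1) :
    ent (fun a => ∑ k, w k * p k a) ≤ ent w + ∑ k, w k * ent (p k) := by
  set q : α → ℝ := fun a => ∑ k, w k * p k a with hq
  have hjoint : (-∑ k, ∑ a, (w k * p k a) * Real.log (w k * p k a))
      = ent w + ∑ k, w k * ent (p k) := by
    have key : ∀ k a, (w k * p k a) * Real.log (w k * p k a)
        = p k a * (w k * Real.log (w k)) + w k * (p k a * Real.log (p k a)) := by
      intro k a
      rcases eq_or_ne (w k) 0 with h | h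
      · simp [h]
      rcases eq_or_ne (p k a) 0 with h' | h'
      · simp [h']
      rw [Real.log_mul h h']; ring
    simp_rw [key, Finset.sum_add_distrib, ← Finset.mul_sum, ← Finset.sum_mul, hp1]
    simp only [ent, one_mul]
    have h2 : ∑ k, w k * -∑ a, p k a * Real.log (p k a)
        = -∑ k, w k * ∑ a, p k a * Real.log (p k a) := by
      rw [← Finset.sum_neg_distrib]
      exact Finset.sum_congr rfl (fun k _ => by ring)
    rw [h2]
    ring
  rw [← hjoint]
  have hmarg : ∑ a, q a * Real.log (q a) = ∑ k, ∑ a, (w k * p k a) * Real.log (q a) := by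
    rw [Finset.sum_comm]
    refine Finset.sum_congr rfl (fun a _ => ?_)
    rw [show q a * Real.log (q a) = (∑ k, w k * p k a) * Real.log (q a) from rfl, Finset.sum_mul]
  show -∑ a, q a * Real.log (q a) ≤ _
  rw [hmarg, neg_le_neg_iff]
  refine Finset.sum_le_sum (fun k _ => Finset.sum_le_sum (fun a _ => ?_))
  rcases eq_or_lt_of_le (mul_nonneg (hw0 k) (hp0 k a)) with h | h
  · rw [← h]; simp
  · have hle : w k * p k a ≤ q a :=
      Finset.single_le_sum (f := fun k' => w k' * p k' a)
        (fun k' _ => mul_nonneg (hw0 k') (hp0 k' a)) (Finset.mem_univ k)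
    have := Real.log_le_log h hle
    nlinarith

lemma ent_pair {A B : Type*} [Fintype A] [Fintype B] (f : A → ℝ) (g : B → ℝ)
    (hf1 : ∑ a, f a = 1) (hg1 : ∑ b, g b = 1) :
    ent (fun k : A × B => f k.1 * g k.2) = ent f + ent g := by
  unfold ent
  rw [Fintype.sum_prod_type]
  have key : ∀ (a : A) (b : B), (f a * g b) * Real.log (f a * g b)
      = g b * (f a * Real.log (f a)) + f a * (g b * Real.log (g b)) := by
    intro a b
    rcases eq_or_ne (f a) 0 with h | h
    · simp [h]
    rcases eq_or_ne (g b) 0 with h' | h'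
    · simp [h']
    rw [Real.log_mul h h']; ring
  simp_rw [key, Finset.sum_add_distrib, ← Finset.mul_sum, ← Finset.sum_mul, hg1]
  rw [hf1]
  simp only [one_mul]
  ring

/-- In the latent-variable table model, the entropy per entry satisfies
`H(X|U,V) ≤ H(X^{m,n})/(mn) ≤ H(X|U,V) + H(U)/n + H(V)/m`. -/
theorem table_entropy_per_entry_bounds {𝒳 L : Type*} [Fintype 𝒳] [Fintype L]
    (qr qc : L → ℝ) (Q : 𝒳 → L → L → ℝ)
    (hqr0 : ∀ u, 0 ≤ qr u) (hqr1 : ∑ u, qr u = 1)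
    (hqc0 : ∀ v, 0 ≤ qc v) (hqc1 : ∑ v, qc v = 1)
    (hQ0 : ∀ x u v, 0 ≤ Q x u v) (hQ1 : ∀ u v, ∑ x, Q x u v = 1)
    (m n : ℕ) (hm : 0 < m) (hn : 0 < n) :
    (∑ u : L, ∑ v : L, qr u * qc v * H2 (fun x : 𝒳 => Q x u v))
        ≤ H2 (tableP qr qc Q m n) / (m * n : ℝ)
    ∧ H2 (tableP qr qc Q m n) / (m * n : ℝ)
        ≤ (∑ u : L, ∑ v : L, qr u * qc v * H2 (fun x : 𝒳 => Q x u v))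
            + H2 qr / (n : ℝ) + H2 qc / (m : ℝ) := by
  classical
  -- nonnegativity and normalization of the latent-pair weight
  have hw0 : ∀ k : (Fin m → L) × (Fin n → L),
      0 ≤ (∏ i, qr (k.1 i)) * (∏ j, qc (k.2 j)) := fun k =>
    mul_nonneg (Finset.prod_nonneg (fun i _ => hqr0 _)) (Finset.prod_nonneg (fun j _ => hqc0 _))
  have hwu1 : ∑ u : Fin m → L, ∏ i, qr (u i) = 1 :=
    sum_pi_one (fun _ => qr) (fun _ => hqr1)
  have hwv1 : ∑ v : Fin n → L, ∏ j, qc (v j) = 1 :=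
    sum_pi_one (fun _ => qc) (fun _ => hqc1)
  have hw1 : ∑ k : (Fin m → L) × (Fin n → L), (∏ i, qr (k.1 i)) * (∏ j, qc (k.2 j)) = 1 := by
    rw [Fintype.sum_prod_type]
    simp_rw [← Finset.mul_sum]
    rw [hwv1]
    simpa using hwu1
  -- the conditional table distributions
  have hp0 : ∀ (k : (Fin m → L) × (Fin n → L)) (x : Fin m → Fin n → 𝒳),
      0 ≤ ∏ i, ∏ j, Q (x i j) (k.1 i) (k.2 j) := fun k x =>
    Finset.prod_nonneg (fun i _ => Finset.prod_nonneg (fun j _ => hQ0 _ _ _))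
  have hPk1 : ∀ (k : (Fin m → L) × (Fin n → L)) (i : Fin m),
      ∑ g : Fin n → 𝒳, ∏ j, Q (g j) (k.1 i) (k.2 j) = 1 := fun k i =>
    sum_pi_one (fun j a => Q a (k.1 i) (k.2 j)) (fun j => hQ1 _ _)
  have hp1 : ∀ k : (Fin m → L) × (Fin n → L),
      ∑ x : Fin m → Fin n → 𝒳, ∏ i, ∏ j, Q (x i j) (k.1 i) (k.2 j) = 1 := fun k =>
    sum_pi_one (fun i (g : Fin n → 𝒳) => ∏ j, Q (g j) (k.1 i) (k.2 j)) (hPk1 k)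
  -- the table distribution is the mixture
  have htable : tableP qr qc Q m n = fun x => ∑ k : (Fin m → L) × (Fin n → L),
      ((∏ i, qr (k.1 i)) * (∏ j, qc (k.2 j))) * ∏ i, ∏ j, Q (x i j) (k.1 i) (k.2 j) := by
    funext x
    rw [show (∑ k : (Fin m → L) × (Fin n → L),
        ((∏ i, qr (k.1 i)) * (∏ j, qc (k.2 j))) * ∏ i, ∏ j, Q (x i j) (k.1 i) (k.2 j))
        = ∑ u : Fin m → L, ∑ v : Fin n → L,
          ((∏ i, qr (u i)) * (∏ j, qc (v j))) * ∏ i, ∏ j, Q (x i j) (u i) (v j) from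
      Fintype.sum_prod_type _]
    rfl
  -- entropy of the conditional distribution factorizes
  have hentp : ∀ k : (Fin m → L) × (Fin n → L),
      ent (fun x : Fin m → Fin n → 𝒳 => ∏ i, ∏ j, Q (x i j) (k.1 i) (k.2 j))
        = ∑ i : Fin m, ∑ j : Fin n, ent (fun x : 𝒳 => Q x (k.1 i) (k.2 j)) := by
    intro k
    have h1 := ent_pi (fun i (g : Fin n → 𝒳) => ∏ j, Q (g j) (k.1 i) (k.2 j)) (hPk1 k)
    rw [h1]
    exact Finset.sum_congr rfl (fun i _ =>
      ent_pi (fun j a => Q a (k.1 i) (k.2 j)) (fun j => hQ1 _ _))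
  -- the conditional entropy sum
  have hS : ∑ k : (Fin m → L) × (Fin n → L),
      ((∏ i, qr (k.1 i)) * (∏ j, qc (k.2 j)))
        * ent (fun x : Fin m → Fin n → 𝒳 => ∏ i, ∏ j, Q (x i j) (k.1 i) (k.2 j))
      = (m * n : ℝ) * ∑ a : L, ∑ b : L, qr a * qc b * ent (fun x : 𝒳 => Q x a b) := by
    simp_rw [hentp, Finset.mul_sum]
    rw [Finset.sum_comm]
    refine Eq.trans (Finset.sum_congr rfl (fun i _ => Finset.sum_comm)) ?_
    have step2 : ∀ (i : Fin m) (j : Fin n), ∑ k : (Fin m → L) × (Fin n → L),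
        ((∏ i', qr (k.1 i')) * (∏ j', qc (k.2 j')))
          * ent (fun x : 𝒳 => Q x (k.1 i) (k.2 j))
        = ∑ a : L, ∑ b : L, qr a * qc b * ent (fun x : 𝒳 => Q x a b) := by
      intro i j
      rw [show (∑ k : (Fin m → L) × (Fin n → L),
          ((∏ i', qr (k.1 i')) * (∏ j', qc (k.2 j')))
            * ent (fun x : 𝒳 => Q x (k.1 i) (k.2 j)))
          = ∑ u : Fin m → L, ∑ v : Fin n → L,
            ((∏ i', qr (u i')) * (∏ j', qc (v j'))) * ent (fun x : 𝒳 => Q x (u i) (v j)) from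
        Fintype.sum_prod_type _]
      have inner : ∀ u : Fin m → L,
          ∑ v : Fin n → L, ((∏ i', qr (u i')) * (∏ j', qc (v j')))
            * ent (fun x : 𝒳 => Q x (u i) (v j))
          = (∏ i', qr (u i')) * ∑ b : L, qc b * ent (fun x : 𝒳 => Q x (u i) b) := by
        intro u
        rw [show (∑ v : Fin n → L, ((∏ i', qr (u i')) * (∏ j', qc (v j')))
            * ent (fun x : 𝒳 => Q x (u i) (v j)))
            = ∑ v : Fin n → L, (∏ i', qr (u i'))
              * ((∏ j', qc (v j')) * ent (fun x : 𝒳 => Q x (u i) (v j))) from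
          Finset.sum_congr rfl (fun v _ => by ring), ← Finset.mul_sum]
        congr 1
        exact sum_pi_marg (fun _ => qc) (fun _ => hqc1) j
          (fun b => ent (fun x : 𝒳 => Q x (u i) b))
      simp_rw [inner]
      rw [sum_pi_marg (fun _ => qr) (fun _ => hqr1) i
        (fun a => ∑ b : L, qc b * ent (fun x : 𝒳 => Q x a b))]
      refine Finset.sum_congr rfl (fun a _ => ?_)
      rw [Finset.mul_sum]
      exact Finset.sum_congr rfl (fun b _ => by ring)
    simp_rw [step2]
    simp [Finset.sum_const, Finset.card_univ, mul_assoc, Finset.mul_sum]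
  -- entropy of the latent-pair weight
  have hentw : ent (fun k : (Fin m → L) × (Fin n → L) =>
      (∏ i, qr (k.1 i)) * (∏ j, qc (k.2 j)))
      = (m : ℝ) * ent qr + (n : ℝ) * ent qc := by
    rw [ent_pair (fun u : Fin m → L => ∏ i, qr (u i)) (fun v : Fin n → L => ∏ j, qc (v j))
      hwu1 hwv1]
    rw [ent_pi (fun _ : Fin m => qr) (fun _ => hqr1), ent_pi (fun _ : Fin n => qc) (fun _ => hqc1)]
    simp [Finset.sum_const, Finset.card_univ]
  -- main natural-log bounds
  have hlower : (m * n : ℝ) * (∑ a : L, ∑ b : L, qr a * qc b * ent (fun x : 𝒳 => Q x a b))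
      ≤ ent (tableP qr qc Q m n) := by
    rw [htable, ← hS]
    exact ent_mix_ge _ _ hw0 hw1 hp0 hp1
  have hupper : ent (tableP qr qc Q m n)
      ≤ (m : ℝ) * ent qr + (n : ℝ) * ent qc
        + (m * n : ℝ) * (∑ a : L, ∑ b : L, qr a * qc b * ent (fun x : 𝒳 => Q x a b)) := by
    rw [htable]
    calc ent (fun x : Fin m → Fin n → 𝒳 => ∑ k : (Fin m → L) × (Fin n → L),
          ((∏ i, qr (k.1 i)) * (∏ j, qc (k.2 j))) * ∏ i, ∏ j, Q (x i j) (k.1 i) (k.2 j))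
        ≤ ent (fun k : (Fin m → L) × (Fin n → L) => (∏ i, qr (k.1 i)) * (∏ j, qc (k.2 j)))
          + ∑ k : (Fin m → L) × (Fin n → L),
            ((∏ i, qr (k.1 i)) * (∏ j, qc (k.2 j)))
              * ent (fun x : Fin m → Fin n → 𝒳 => ∏ i, ∏ j, Q (x i j) (k.1 i) (k.2 j)) :=
          ent_mix_le _ _ hw0 hp0 hp1
      _ = (m : ℝ) * ent qr + (n : ℝ) * ent qc
          + (m * n : ℝ) * (∑ a : L, ∑ b : L, qr a * qc b * ent (fun x : 𝒳 => Q x a b)) := by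
          rw [hentw, hS]
  -- convert to base-2 entropies
  have hl : (0 : ℝ) < Real.log 2 := Real.log_pos one_lt_two
  have hM : (0 : ℝ) < m := Nat.cast_pos.mpr hm
  have hN : (0 : ℝ) < n := Nat.cast_pos.mpr hn
  have hLHS : (∑ u : L, ∑ v : L, qr u * qc v * H2 (fun x : 𝒳 => Q x u v))
      = (∑ a : L, ∑ b : L, qr a * qc b * ent (fun x : 𝒳 => Q x a b)) / Real.log 2 := by
    rw [Finset.sum_div]
    refine Finset.sum_congr rfl (fun a _ => ?_)
    rw [Finset.sum_div]
    refine Finset.sum_congr rfl (fun b _ => ?_)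
    rw [H2_eq_ent, mul_div_assoc]
  rw [hLHS, H2_eq_ent, H2_eq_ent, H2_eq_ent]
  constructor
  · rw [div_div, div_le_div_iff₀ hl (by positivity)]
    nlinarith
  · have key : ent (tableP qr qc Q m n) / Real.log 2 / ((m : ℝ) * n)
        ≤ ((∑ a : L, ∑ b : L, qr a * qc b * ent (fun x : 𝒳 => Q x a b)) * ((m : ℝ) * n)
            + ent qr * m + ent qc * n) / (Real.log 2 * ((m : ℝ) * n)) := by
      rw [div_div, div_le_div_iff₀ (by positivity) (by positivity)]
      nlinarith [mul_le_mul_of_nonneg_right hupper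
        (le_of_lt (mul_pos hl (mul_pos hM hN)))]
    have expand : ((∑ a : L, ∑ b : L, qr a * qc b * ent (fun x : 𝒳 => Q x a b)) * ((m : ℝ) * n)
            + ent qr * m + ent qc * n) / (Real.log 2 * ((m : ℝ) * n))
        = (∑ a : L, ∑ b : L, qr a * qc b * ent (fun x : 𝒳 => Q x a b)) / Real.log 2
          + (ent qr / Real.log 2) / (n : ℝ) + (ent qc / Real.log 2) / (m : ℝ) := by
      field_simp
    rw [expand] at key
    exact key
end
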